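/- arXiv:2006.15897 — 2 statements merged into one kernel-verified Lean document; each statement's English description precedes it below -/
import Mathlib

section
/- If μ and ν are probability measures on subsets of a finite set E each satisfying the FKG inequality (positive association: E[fg] ≥ E[f]E[g] for all increasing bounded functions f, g), then the union measure μ ∪ ν (law of A ∪ B with A ∼ μ, B ∼ ν independent) also satisfies the FKG inequality. -/
open Finset

def IsPercolation {E : Type*} [Fintype E] [DecidableEq E] (μ : Finset E → ℝ) : Prop :=
  (∀ A, 0 ≤ μ A) ∧ ∑ A : Finset E, μ A = 1

/-- `f` is increasing for the inclusion order on subsets. -/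
def IncreasingFun {E : Type*} [Fintype E] [DecidableEq E] (f : Finset E → ℝ) : Prop :=
  ∀ A B : Finset E, A ⊆ B → f A ≤ f B

/-- Positive association (FKG inequality): `E[fg] ≥ E[f]·E[g]` for all increasing `f, g`. -/
def SatisfiesFKG {E : Type*} [Fintype E] [DecidableEq E] (μ : Finset E → ℝ) : Prop :=
  ∀ f g : Finset E → ℝ, IncreasingFun f → IncreasingFun g →
    (∑ A : Finset E, μ A * f A) * (∑ A : Finset E, μ A * g A)
      ≤ ∑ A : Finset E, μ A * (f A * g A)

/-- The union measure: law of `A ∪ B` with `A ∼ μ`, `B ∼ ν` independent. -/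
def unionMeasure {E : Type*} [Fintype E] [DecidableEq E]
    (μ ν : Finset E → ℝ) (C : Finset E) : ℝ :=
  ∑ A : Finset E, ∑ B : Finset E, if A ∪ B = C then μ A * ν B else 0

lemma unionMeasure_expect {E : Type*} [Fintype E] [DecidableEq E]
    (μ ν : Finset E → ℝ) (h : Finset E → ℝ) :
    ∑ C : Finset E, unionMeasure μ ν C * h C
      = ∑ A : Finset E, ∑ B : Finset E, μ A * ν B * h (A ∪ B) := by
  unfold unionMeasure
  simp_rw [Finset.sum_mul, ite_mul, zero_mul]
  rw [Finset.sum_comm]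
  congr 1
  ext A
  rw [Finset.sum_comm]
  congr 1
  ext B
  simp

/-- If `μ` and `ν` both satisfy the FKG inequality, so does their union measure. -/
theorem unionMeasure_FKG {E : Type*} [Fintype E] [DecidableEq E]
    (μ ν : Finset E → ℝ) (hμ : IsPercolation μ) (hν : IsPercolation ν)
    (hμFKG : SatisfiesFKG μ) (hνFKG : SatisfiesFKG ν) :
    SatisfiesFKG (unionMeasure μ ν) := by
  intro f g hf hg
  rw [unionMeasure_expect, unionMeasure_expect, unionMeasure_expect]
  set F : Finset E → ℝ := fun A => ∑ B : Finset E, ν B * f (A ∪ B) with hF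
  set G : Finset E → ℝ := fun A => ∑ B : Finset E, ν B * g (A ∪ B) with hG
  have hFinc : IncreasingFun F := by
    intro A A' hAA
    exact Finset.sum_le_sum fun B _ => mul_le_mul_of_nonneg_left
      (hf _ _ (Finset.union_subset_union_left hAA)) (hν.1 B)
  have hGinc : IncreasingFun G := by
    intro A A' hAA
    exact Finset.sum_le_sum fun B _ => mul_le_mul_of_nonneg_left
      (hg _ _ (Finset.union_subset_union_left hAA)) (hν.1 B)
  have h1 : (∑ A : Finset E, μ A * F A) * (∑ A : Finset E, μ A * G A)
      ≤ ∑ A : Finset E, μ A * (F A * G A) := hμFKG F G hFinc hGinc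
  have heqF : ∀ A : Finset E, ∑ B : Finset E, μ A * ν B * f (A ∪ B) = μ A * F A := by
    intro A; rw [hF, Finset.mul_sum]; exact Finset.sum_congr rfl fun B _ => by ring
  have heqG : ∀ A : Finset E, ∑ B : Finset E, μ A * ν B * g (A ∪ B) = μ A * G A := by
    intro A; rw [hG, Finset.mul_sum]; exact Finset.sum_congr rfl fun B _ => by ring
  calc (∑ A : Finset E, ∑ B : Finset E, μ A * ν B * f (A ∪ B)) *
        (∑ A : Finset E, ∑ B : Finset E, μ A * ν B * g (A ∪ B))
      = (∑ A : Finset E, μ A * F A) * (∑ A : Finset E, μ A * G A) := by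
        rw [Finset.sum_congr rfl fun A _ => heqF A, Finset.sum_congr rfl fun A _ => heqG A]
    _ ≤ ∑ A : Finset E, μ A * (F A * G A) := h1
    _ ≤ ∑ A : Finset E, ∑ B : Finset E, μ A * ν B * (f (A ∪ B) * g (A ∪ B)) := by
        apply Finset.sum_le_sum
        intro A _
        have h2 : F A * G A ≤ ∑ B : Finset E, ν B * (f (A ∪ B) * g (A ∪ B)) :=
          hνFKG (fun B => f (A ∪ B)) (fun B => g (A ∪ B))
            (fun B B' h => hf _ _ (Finset.union_subset_union_right h))
            (fun B B' h => hg _ _ (Finset.union_subset_union_right h))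
        calc μ A * (F A * G A) ≤ μ A * ∑ B : Finset E, ν B * (f (A ∪ B) * g (A ∪ B)) :=
              mul_le_mul_of_nonneg_left h2 (hμ.1 A)
          _ = ∑ B : Finset E, μ A * ν B * (f (A ∪ B) * g (A ∪ B)) := by
              rw [Finset.mul_sum]; exact Finset.sum_congr rfl fun B _ => by ring
end

section
/- Coupling identity (Theorem: uniform even subgraph of the double current is the loop-O(1) model): For a finite graph G with edge set E and x ∈ (0,1), define for ω ⊆ E the weight W(ω) = |ℰ_∅(ω)| · Σ_{ω₁ ∈ ℰ_∅(G), ω₁ ⊆ ω} x^{|ω₁|} x^{2(|ω|−|ω₁|)} (1−x²)^{|E|−|ω|}. Then for every even subgraph η of G: Σ_{ω ⊇ η} (1/|ℰ_∅(ω)|) · W(ω) = Z · x^{|η|}, where Z = Σ_{g ∈ ℰ_∅(G)} x^{|g|}. Consequently, sampling ω with probability W(ω)/Z² and then a uniform even subgraph of ω yields the loop-O(1) measure l_x(η) = x^{|η|}/Z. -/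
open Finset
open scoped Classical

def degIn {V E : Type*} [Fintype E] [DecidableEq V] (ends : E → V × V)
    (g : Finset E) (v : V) : ℕ :=
  (g.filter fun e => (ends e).1 = v).card + (g.filter fun e => (ends e).2 = v).card

def IsEvenSubgraph {V E : Type*} [Fintype E] [DecidableEq V] (ends : E → V × V)
    (g : Finset E) : Prop :=
  ∀ v : V, Even (degIn ends g v)

/-- The double random current weight of a configuration `ω`:
`W(ω) = |ℰ_∅(ω)| · Σ_{ω₁ even, ω₁ ⊆ ω} x^{|ω₁|} x^{2(|ω|−|ω₁|)} (1−x²)^{|E|−|ω|}`. -/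
noncomputable def dcWeight {V E : Type*} [Fintype V] [Fintype E]
    [DecidableEq V] [DecidableEq E] (ends : E → V × V) (x : ℝ) (ω : Finset E) : ℝ :=
  ((ω.powerset.filter fun g => IsEvenSubgraph ends g).card : ℝ) *
    ∑ ω₁ ∈ ω.powerset.filter fun g => IsEvenSubgraph ends g,
      x ^ ω₁.card * x ^ (2 * (ω.card - ω₁.card)) * (1 - x ^ 2) ^ (Fintype.card E - ω.card)

section Aux

variable {V E : Type*} [Fintype V] [Fintype E] [DecidableEq V] [DecidableEq E]

lemma isEvenSubgraph_empty (ends : E → V × V) : IsEvenSubgraph ends (∅ : Finset E) := by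
  intro v; simp [degIn]

lemma card_symmDiff_parity (A B : Finset E) :
    (symmDiff A B).card + 2 * (A ∩ B).card = A.card + B.card := by
  have h1 : symmDiff A B ∪ A ∩ B = A ∪ B := by
    ext e; simp only [Finset.mem_union, Finset.mem_inter, Finset.mem_symmDiff]; tauto
  have h2 : Disjoint (symmDiff A B) (A ∩ B) := by
    simp only [Finset.disjoint_left, Finset.mem_symmDiff, Finset.mem_inter]; tauto
  have h3 := Finset.card_union_of_disjoint h2
  rw [h1] at h3
  have h4 := Finset.card_union_add_card_inter A B
  omega

lemma filter_symmDiff_eq (p : E → Prop) [DecidablePred p] (A B : Finset E) :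
    (symmDiff A B).filter p = symmDiff (A.filter p) (B.filter p) := by
  ext e; simp only [Finset.mem_filter, Finset.mem_symmDiff]; tauto

lemma isEvenSubgraph_symmDiff (ends : E → V × V) {A B : Finset E}
    (hA : IsEvenSubgraph ends A) (hB : IsEvenSubgraph ends B) :
    IsEvenSubgraph ends (symmDiff A B) := by
  intro v
  have e1 := hA v
  have e2 := hB v
  unfold degIn at *
  rw [filter_symmDiff_eq, filter_symmDiff_eq]
  have p1 := card_symmDiff_parity (A.filter fun e => (ends e).1 = v)
    (B.filter fun e => (ends e).1 = v)
  have p2 := card_symmDiff_parity (A.filter fun e => (ends e).2 = v)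
    (B.filter fun e => (ends e).2 = v)
  rw [Nat.even_iff] at e1 e2 ⊢
  omega

lemma card_symmDiff_eq (A B : Finset E) :
    (symmDiff A B).card = (A \ B).card + (B \ A).card := by
  rw [symmDiff_def, Finset.sup_eq_union]
  exact Finset.card_union_of_disjoint disjoint_sdiff_sdiff

lemma sum_pow_binom (s : Finset E) (a b : ℝ) :
    ∑ T ∈ s.powerset, a ^ T.card * b ^ (s.card - T.card) = (a + b) ^ s.card := by
  have h := Finset.prod_add (fun _ : E => a) (fun _ : E => b) s
  simp only [Finset.prod_const] at h
  rw [h]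
  exact Finset.sum_congr rfl fun T hT => by
    rw [Finset.card_sdiff_of_subset (Finset.mem_powerset.mp hT)]

end Aux

/-- Coupling identity: sampling a uniform even subgraph of the traced double random
current gives the loop-O(1) model.  For every even subgraph `η`,
`Σ_{ω ⊇ η} |ℰ_∅(ω)|⁻¹ · W(ω) = Z · x^{|η|}` where `Z = Σ_{g even} x^{|g|}`. -/
theorem uniform_even_subgraph_of_double_current {V E : Type*} [Fintype V] [Fintype E]
    [DecidableEq V] [DecidableEq E] (ends : E → V × V) (x : ℝ)
    (hx : x ∈ Set.Ioo (0 : ℝ) 1) (η : Finset E) (hη : IsEvenSubgraph ends η) :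
    ∑ ω ∈ (univ : Finset (Finset E)).filter fun ω => η ⊆ ω,
        ((ω.powerset.filter fun g => IsEvenSubgraph ends g).card : ℝ)⁻¹ *
          dcWeight ends x ω
      = (∑ g ∈ (univ : Finset (Finset E)).filter fun g => IsEvenSubgraph ends g,
          x ^ g.card) * x ^ η.card := by
  set F : Finset E → Finset E → ℝ := fun ω g =>
    x ^ g.card * x ^ (2 * (ω.card - g.card)) * (1 - x ^ 2) ^ (Fintype.card E - ω.card) with hF
  -- Step 1: the cardinality factors cancel.
  have hcard : ∀ ω : Finset E,
      ((ω.powerset.filter fun g => IsEvenSubgraph ends g).card : ℝ) ≠ 0 := by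
    intro ω
    have hmem : (∅ : Finset E) ∈ ω.powerset.filter fun g => IsEvenSubgraph ends g := by
      simp [Finset.mem_filter, Finset.empty_subset, isEvenSubgraph_empty]
    exact_mod_cast Finset.card_ne_zero_of_mem hmem
  have step1 : ∀ ω : Finset E,
      ((ω.powerset.filter fun g => IsEvenSubgraph ends g).card : ℝ)⁻¹ * dcWeight ends x ω
        = ∑ g ∈ ω.powerset.filter fun g => IsEvenSubgraph ends g, F ω g := by
    intro ω
    rw [dcWeight, ← mul_assoc, inv_mul_cancel₀ (hcard ω), one_mul]
  rw [Finset.sum_congr rfl fun ω _ => step1 ω]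
  -- Step 2: interchange the two sums.
  have hpow : ∀ ω : Finset E, (ω.powerset.filter fun g => IsEvenSubgraph ends g)
      = univ.filter fun g => g ⊆ ω ∧ IsEvenSubgraph ends g := by
    intro ω; ext g; simp [Finset.mem_powerset, and_comm]
  have step2 : ∑ ω ∈ (univ : Finset (Finset E)).filter (fun ω => η ⊆ ω),
        ∑ g ∈ ω.powerset.filter fun g => IsEvenSubgraph ends g, F ω g
      = ∑ g ∈ (univ : Finset (Finset E)).filter (fun g => IsEvenSubgraph ends g),
          ∑ ω ∈ (univ : Finset (Finset E)).filter (fun ω => η ∪ g ⊆ ω), F ω g := by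
    calc ∑ ω ∈ (univ : Finset (Finset E)).filter (fun ω => η ⊆ ω),
            ∑ g ∈ ω.powerset.filter fun g => IsEvenSubgraph ends g, F ω g
        = ∑ ω : Finset E, ∑ g ∈ (univ : Finset (Finset E)).filter
            (fun g => IsEvenSubgraph ends g),
            (if η ⊆ ω ∧ g ⊆ ω then F ω g else 0) := by
          rw [Finset.sum_filter]
          refine Finset.sum_congr rfl fun ω _ => ?_
          by_cases h : η ⊆ ω
          · rw [if_pos h, hpow ω, Finset.sum_filter, Finset.sum_filter]
            refine Finset.sum_congr rfl fun g _ => ?_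
            by_cases h2 : IsEvenSubgraph ends g <;> by_cases h3 : g ⊆ ω <;>
              simp [h, h2, h3]
          · rw [if_neg h]
            exact (Finset.sum_eq_zero fun g _ => by simp [h]).symm
      _ = ∑ g ∈ (univ : Finset (Finset E)).filter (fun g => IsEvenSubgraph ends g),
            ∑ ω : Finset E, (if η ⊆ ω ∧ g ⊆ ω then F ω g else 0) := Finset.sum_comm
      _ = ∑ g ∈ (univ : Finset (Finset E)).filter (fun g => IsEvenSubgraph ends g),
            ∑ ω ∈ (univ : Finset (Finset E)).filter (fun ω => η ∪ g ⊆ ω), F ω g := by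
          refine Finset.sum_congr rfl fun g _ => ?_
          rw [Finset.sum_filter]
          exact Finset.sum_congr rfl fun ω _ => by
            simp [Finset.union_subset_iff]
  rw [step2]
  -- Step 3: compute the inner sum over ω ⊇ η ∪ g.
  have inner : ∀ g : Finset E, g.card ≤ (η ∪ g).card →
      ∑ ω ∈ (univ : Finset (Finset E)).filter (fun ω => η ∪ g ⊆ ω), F ω g
        = x ^ g.card * x ^ (2 * ((η ∪ g).card - g.card)) := by
    intro g hg
    set S := η ∪ g with hS
    have reindex : ∑ ω ∈ (univ : Finset (Finset E)).filter (fun ω => S ⊆ ω), F ω g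
        = ∑ T ∈ Sᶜ.powerset, F (S ∪ T) g := by
      refine Finset.sum_nbij' (fun ω => ω \ S) (fun T => S ∪ T) ?_ ?_ ?_ ?_ ?_
      · intro ω hω
        rw [Finset.mem_filter] at hω
        rw [Finset.mem_powerset]
        intro e he
        rw [Finset.mem_sdiff] at he
        simp [Finset.mem_compl, he.2]
      · intro T hT
        rw [Finset.mem_powerset] at hT
        simp [Finset.mem_filter]
      · intro ω hω
        rw [Finset.mem_filter] at hω
        exact Finset.union_sdiff_of_subset hω.2
      · intro T hT
        rw [Finset.mem_powerset] at hT
        have hd : Disjoint S T := by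
          rw [Finset.disjoint_right]
          intro e he
          have := hT he
          rw [Finset.mem_compl] at this
          exact this
        show (S ∪ T) \ S = T
        exact Finset.union_sdiff_cancel_left hd
      · intro ω hω
        rw [Finset.mem_filter] at hω
        show F ω g = F (S ∪ ω \ S) g
        rw [Finset.union_sdiff_of_subset hω.2]
    rw [reindex]
    have hterm : ∀ T ∈ Sᶜ.powerset, F (S ∪ T) g
        = (x ^ g.card * x ^ (2 * (S.card - g.card))) *
            ((x ^ 2) ^ T.card * (1 - x ^ 2) ^ (Sᶜ.card - T.card)) := by
      intro T hT
      rw [Finset.mem_powerset] at hT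
      have hd : Disjoint S T := by
        rw [Finset.disjoint_right]
        intro e he
        have := hT he
        rw [Finset.mem_compl] at this
        exact this
      have hcardu : (S ∪ T).card = S.card + T.card := Finset.card_union_of_disjoint hd
      have hScompl : Sᶜ.card = Fintype.card E - S.card := by
        rw [Finset.card_compl]
      have hTle : T.card ≤ Sᶜ.card := Finset.card_le_card hT
      have hSle : S.card ≤ Fintype.card E := Finset.card_le_univ S
      have h1 : 2 * (S.card + T.card - g.card)
          = 2 * (S.card - g.card) + 2 * T.card := by omega
      have h2 : Fintype.card E - (S.card + T.card) = Sᶜ.card - T.card := by omega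
      show x ^ g.card * x ^ (2 * ((S ∪ T).card - g.card)) *
          (1 - x ^ 2) ^ (Fintype.card E - (S ∪ T).card) = _
      rw [hcardu, h1, h2, pow_add, pow_mul]
      ring
    rw [Finset.sum_congr rfl hterm, ← Finset.mul_sum]
    have : ∑ T ∈ Sᶜ.powerset, (x ^ 2) ^ T.card * (1 - x ^ 2) ^ (Sᶜ.card - T.card)
        = (x ^ 2 + (1 - x ^ 2)) ^ Sᶜ.card := sum_pow_binom Sᶜ (x ^ 2) (1 - x ^ 2)
    rw [this]
    norm_num
  have hgle : ∀ g : Finset E, g.card ≤ (η ∪ g).card :=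
    fun g => Finset.card_le_card Finset.subset_union_right
  rw [Finset.sum_congr rfl fun g _ => inner g (hgle g)]
  -- Step 4: the exponent identity and the symmetric-difference bijection.
  have hexp : ∀ g : Finset E,
      x ^ g.card * x ^ (2 * ((η ∪ g).card - g.card)) = x ^ (symmDiff η g).card * x ^ η.card := by
    intro g
    rw [← pow_add, ← pow_add]
    congr 1
    have h1 : (η \ g).card + (η ∩ g).card = η.card := Finset.card_sdiff_add_card_inter η g
    have h2 : (g \ η).card + (g ∩ η).card = g.card := Finset.card_sdiff_add_card_inter g η
    have h3 : (η ∪ g).card + (η ∩ g).card = η.card + g.card :=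
      Finset.card_union_add_card_inter η g
    have h4 : (symmDiff η g).card = (η \ g).card + (g \ η).card := card_symmDiff_eq η g
    have h5 : (η ∩ g).card = (g ∩ η).card := by rw [Finset.inter_comm]
    have h6 : g.card ≤ (η ∪ g).card := hgle g
    omega
  rw [Finset.sum_congr rfl fun g _ => hexp g]
  rw [← Finset.sum_mul]
  congr 1
  refine Finset.sum_nbij' (fun g => symmDiff η g) (fun h => symmDiff η h) ?_ ?_ ?_ ?_ ?_
  · intro g hg
    rw [Finset.mem_filter] at hg ⊢
    exact ⟨Finset.mem_univ _, isEvenSubgraph_symmDiff ends hη hg.2⟩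
  · intro h hh
    rw [Finset.mem_filter] at hh ⊢
    exact ⟨Finset.mem_univ _, isEvenSubgraph_symmDiff ends hη hh.2⟩
  · intro g _; exact symmDiff_symmDiff_cancel_left η g
  · intro h _; exact symmDiff_symmDiff_cancel_left η h
  · intro g _; rfl
end
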